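/- arXiv:1809.02229 — 6 statements merged into one kernel-verified Lean document; each statement's English description precedes it below -/
import Mathlib

section
/- Let V be a commutative quantale and X a set equipped with, for every r ∈ V, a binary relation F(r) on X such that: the identity relation is contained in F(e); F(r) · F(s) ⊆ F(r⊗s); F(r) ⊆ F(s) whenever s ≤ r; and F(⋁ᵢ rᵢ) ⊇ ⋂ᵢ F(rᵢ) for all families (rᵢ). Then defining d(x,y) = ⋁{r ∈ V | (x,y) ∈ F(r)} makes (X, d) a V-category, and moreover (x,y) ∈ F(r) holds if and only if r ≤ d(x,y). -/
/-! Each fibre `{s | (x, y) ∈ F s}` is a down-set of `V` containing its own supremum, hence it is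
the principal down-set of `d(x, y)`; the V-category axioms then follow from those of `F` because
the tensor distributes over suprema in each variable. -/

section

variable {V : Type*} [CompleteLattice V]

theorem mem_iff_le_sSup_of_isLowerSet {S : Set V} (hS : IsLowerSet S) (hmem : sSup S ∈ S)
    {r : V} : r ∈ S ↔ r ≤ sSup S :=
  ⟨fun h => le_sSup h, fun h => hS h hmem⟩

theorem tensor_sSup_sSup_le {t : V → V → V} (hcomm : ∀ a b, t a b = t b a)
    (hsup : ∀ (a : V) (S : Set V), t a (sSup S) = ⨆ s ∈ S, t a s)
    {A B : Set V} {c : V} (h : ∀ a ∈ A, ∀ b ∈ B, t a b ≤ c) : t (sSup A) (sSup B) ≤ c := by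
  rw [hsup, iSup₂_le_iff]
  intro b hb
  rw [hcomm, hsup, iSup₂_le_iff]
  intro a ha
  rw [hcomm]
  exact h a ha b hb

end

theorem relational_presheaf_to_Vcat_general {V X : Type*} [CompleteLattice V]
    (t : V → V → V) (e : V) (F : V → Set (X × X))
    (hcomm : ∀ a b, t a b = t b a)
    (hsup : ∀ (a : V) (S : Set V), t a (sSup S) = ⨆ s ∈ S, t a s)
    (hid : ∀ x : X, (x, x) ∈ F e)
    (hcomp : ∀ (r s : V) (x y z : X), (x, y) ∈ F r → (y, z) ∈ F s → (x, z) ∈ F (t r s))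
    (hanti : ∀ r s : V, s ≤ r → F r ⊆ F s)
    (hcont : ∀ S : Set V, (⋂ r ∈ S, F r) ⊆ F (sSup S)) :
    (∀ x : X, e ≤ sSup {r | (x, x) ∈ F r}) ∧
    (∀ x y z : X,
        t (sSup {r | (x, y) ∈ F r}) (sSup {r | (y, z) ∈ F r}) ≤ sSup {r | (x, z) ∈ F r}) ∧
    (∀ (r : V) (x y : X), (x, y) ∈ F r ↔ r ≤ sSup {s | (x, y) ∈ F s}) := by
  refine ⟨fun x => le_sSup (hid x), fun x y z => ?_, fun r x y => ?_⟩
  · exact tensor_sSup_sSup_le hcomm hsup fun a ha b hb => le_sSup (hcomp a b x y z ha hb)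
  · have hlower : IsLowerSet {s | (x, y) ∈ F s} := fun s s' hle hs => hanti s s' hle hs
    have hmem : sSup {s | (x, y) ∈ F s} ∈ {s | (x, y) ∈ F s} :=
      hcont _ (Set.mem_iInter₂.mpr fun _ hs => hs)
    exact mem_iff_le_sSup_of_isLowerSet hlower hmem

/-- a continuous relational presheaf gives rise to a V-category. -/
theorem relational_presheaf_to_Vcat {V X : Type*} [CompleteLattice V]
    (t : V → V → V) (e : V) (F : V → Set (X × X))
    (hcomm : ∀ a b, t a b = t b a)
    (hassoc : ∀ a b c, t (t a b) c = t a (t b c))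
    (hunit : ∀ a, t e a = a)
    (hsup : ∀ (a : V) (S : Set V), t a (sSup S) = ⨆ s ∈ S, t a s)
    (hid : ∀ x : X, (x, x) ∈ F e)
    (hcomp : ∀ (r s : V) (x y z : X), (x, y) ∈ F r → (y, z) ∈ F s → (x, z) ∈ F (t r s))
    (hanti : ∀ r s : V, s ≤ r → F r ⊆ F s)
    (hcont : ∀ S : Set V, (⋂ r ∈ S, F r) ⊆ F (sSup S)) :
    (∀ x : X, e ≤ sSup {r | (x, x) ∈ F r}) ∧
    (∀ x y z : X,
        t (sSup {r | (x, y) ∈ F r}) (sSup {r | (y, z) ∈ F r}) ≤ sSup {r | (x, z) ∈ F r}) ∧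
    (∀ (r : V) (x y : X), (x, y) ∈ F r ↔ r ≤ sSup {s | (x, y) ∈ F s}) :=
  relational_presheaf_to_Vcat_general t e F hcomm hsup hid hcomp hanti hcont
end

section
/- For a commutative quantale V, the assignment sending a V-category X to its continuous relational presheaf Φ(X), given by Φ(X)(r) = {(x,y) | r ≤ X(x,y)}, and sending a continuous relational presheaf F on a set X to the V-category Ψ(F) with Ψ(F)(x,y) = ⋁{r | (x,y) ∈ F(r)}, gives mutually inverse constructions: Ψ(Φ(X)) = X for every V-category X, and Φ(Ψ(F)) = F for every continuous relational presheaf F. -/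
/-!
Both round trips are pure order theory. A hom-value `a` is recovered as `⋁ (Iic a)`. In the other
direction, continuity of `F` makes `F` attain its suprema: every `p` lies in
`F (⋁ {s | p ∈ F s})`, so `r ≤ ⋁ {s | p ∈ F s}` puts `p` in `F r` by antitonicity.
-/

section RelationalPresheaf

variable {V α : Type*} [CompleteLattice V] {F : V → Set α}

theorem mem_apply_sSup_setOf_mem (hF : ∀ S : Set V, F (sSup S) = ⋂ r ∈ S, F r) (p : α) :
    p ∈ F (sSup {s | p ∈ F s}) := by
  rw [hF]
  exact Set.mem_iInter₂.mpr fun _ hs => hs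

theorem eq_setOf_le_sSup_setOf_mem (hanti : Antitone F)
    (hF : ∀ S : Set V, F (sSup S) = ⋂ r ∈ S, F r) (r : V) :
    F r = {p | r ≤ sSup {s | p ∈ F s}} := by
  ext p
  exact ⟨fun hp => le_sSup hp, fun hr => hanti hr (mem_apply_sSup_setOf_mem hF p)⟩

end RelationalPresheaf

theorem Vcat_relpresh_equivalence_general {V X : Type*} [CompleteLattice V]
    (t : V → V → V) (e : V) :
    (∀ d : X → X → V,
      (∀ x, e ≤ d x x) →
      (∀ x y z, t (d x y) (d y z) ≤ d x z) →
      ∀ x y : X, sSup {r : V | r ≤ d x y} = d x y) ∧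
    (∀ F : V → Set (X × X),
      (∀ x : X, (x, x) ∈ F e) →
      (∀ (r s : V) (x y z : X), (x, y) ∈ F r → (y, z) ∈ F s → (x, z) ∈ F (t r s)) →
      (∀ r s : V, s ≤ r → F r ⊆ F s) →
      (∀ S : Set V, F (sSup S) = ⋂ r ∈ S, F r) →
      ∀ r : V, F r = {p : X × X | r ≤ sSup {s : V | p ∈ F s}}) :=
  ⟨fun _ _ _ _ _ => isLUB_Iic.sSup_eq,
    fun _ _ _ hanti hcont => eq_setOf_le_sSup_setOf_mem (fun _ _ h => hanti _ _ h) hcont⟩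

/-- V-categories and continuous relational presheaves are mutually inverse. -/
theorem Vcat_relpresh_equivalence {V X : Type*} [CompleteLattice V]
    (t : V → V → V) (e : V)
    (hcomm : ∀ a b, t a b = t b a)
    (hassoc : ∀ a b c, t (t a b) c = t a (t b c))
    (hunit : ∀ a, t e a = a)
    (hsup : ∀ (a : V) (S : Set V), t a (sSup S) = ⨆ s ∈ S, t a s) :
    (∀ d : X → X → V,
      (∀ x, e ≤ d x x) →
      (∀ x y z, t (d x y) (d y z) ≤ d x z) →
      ∀ x y : X, sSup {r : V | r ≤ d x y} = d x y) ∧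
    (∀ F : V → Set (X × X),
      (∀ x : X, (x, x) ∈ F e) →
      (∀ (r s : V) (x y z : X), (x, y) ∈ F r → (y, z) ∈ F s → (x, z) ∈ F (t r s)) →
      (∀ r s : V, s ≤ r → F r ⊆ F s) →
      (∀ S : Set V, F (sSup S) = ⋂ r ∈ S, F r) →
      ∀ r : V, F r = {p : X × X | r ≤ sSup {s : V | p ∈ F s}}) :=
  Vcat_relpresh_equivalence_general t e
end

section
/- Let V be a nontrivial commutative quantale (e ≠ ⊥). The discrete V-category functor D from sets to V-categories, sending a set X to the V-category DX with objects X, hom-values e on the diagonal and ⊥ off the diagonal, is full and faithful in the V-cat-enriched sense (i.e., the canonical comparison between the V-category Set(X,Y)·𝟙 and the V-category of V-functors [DX, DY] is an isomorphism for all sets X, Y) if and only if V is integral, i.e., e = ⊤. -/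
open Classical

theorem iInf_ite_top_bot {V ι : Type*} [CompleteLattice V] (p : ι → Prop) :
    ⨅ i, (if p i then ⊤ else ⊥ : V) = if ∀ i, p i then ⊤ else ⊥ := by
  split_ifs with h
  · simp [h]
  · obtain ⟨i, hi⟩ := not_forall.mp h
    exact le_bot_iff.mp (iInf_le_of_le i (by simp [hi]))

theorem discrete_functor_ff_iff_integral_general {V : Type*} [CompleteLattice V]
    (e : V) :
    (∀ (X Y : Type) (f g : X → Y),
        (if f = g then e else (⊥ : V)) = ⨅ x, (if f x = g x then e else (⊥ : V)))
      ↔ e = ⊤ := by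
  constructor
  · -- the self-distance of the empty function is `e` on one side and an empty meet on the other
    intro h
    simpa [iInf_of_isEmpty] using h Empty Empty Empty.elim Empty.elim
  · rintro rfl X Y f g
    rw [iInf_ite_top_bot, funext_iff]

/-- the discrete functor D : Set → V-cat is fully faithful iff V is integral. -/
theorem discrete_functor_ff_iff_integral {V : Type*} [CompleteLattice V]
    (t : V → V → V) (e : V)
    (hcomm : ∀ a b, t a b = t b a)
    (hassoc : ∀ a b c, t (t a b) c = t a (t b c))
    (hunit : ∀ a, t e a = a)
    (hsup : ∀ (a : V) (S : Set V), t a (sSup S) = ⨆ s ∈ S, t a s)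
    (hnontriv : e ≠ ⊥) :
    (∀ (X Y : Type) (f g : X → Y),
        (if f = g then e else (⊥ : V)) = ⨅ x, (if f x = g x then e else (⊥ : V)))
      ↔ e = ⊤ :=
  discrete_functor_ff_iff_integral_general e
end

section
/- Let V be a commutative quantale, X a set, H an assignment of a V-category HX_r to each relation level, and let the 'shortest path' formula define on the object set of a V-category H X₀ new hom-values by taking the supremum over all finite zig-zag paths of tensors of hom-values in H X₀ interleaved with quantale elements r₁,…,rₙ coming from witnesses. Then the resulting structure H^♯X satisfies: (1) H X₀(A',A) ≤ H^♯X(A',A) for all A', A; (2) e ≤ H^♯X(A,A); and (3) H^♯X(A',A) ⊗ H^♯X(A,A'') ≤ H^♯X(A',A''), i.e., H^♯X is a V-category. -/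
/-- Zig-zag paths: `ZigZag t W R a b v` means there is a path
`(A₀',A₀),(A₁',A₁),…,(Aₙ',Aₙ)` with `a = A₀'`, `b = Aₙ`, witnesses
`(Aᵢ₋₁, Aᵢ') ∈ R rᵢ`, and value
`v = W A₀' A₀ ⊗ r₁ ⊗ W A₁' A₁ ⊗ ⋯ ⊗ rₙ ⊗ W Aₙ' Aₙ`. -/
inductive ZigZag {V S : Type*} (t : V → V → V) (W : S → S → V)
    (R : V → Set (S × S)) : S → S → V → Prop
  | base (a b : S) : ZigZag t W R a b (W a b)
  | step (a b c d : S) (r v : V) :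
      ZigZag t W R a b v → (b, c) ∈ R r → ZigZag t W R a d (t (t v r) (W c d))

/-!
`W a b` is the value of the zig-zag of length zero, and `e ≤ W a a`.
Two zig-zags `a ⇝ b` and `b ⇝ c` concatenate to a zig-zag `a ⇝ c` whose value dominates the
tensor of theirs: the last `W`-factor of the first path and the first `W`-factor of the second
merge into a single one by transitivity of `W`. Since `⊗` distributes over suprema, the tensor
of the two suprema is the supremum of these tensors, hence below the supremum over `a ⇝ c`.
-/

section

variable {V : Type*} [CompleteLattice V] {t : V → V → V}

theorem monotone_of_tensor_sSup
    (hsup : ∀ (a : V) (Sv : Set V), t a (sSup Sv) = ⨆ s ∈ Sv, t a s) (a : V) :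
    Monotone (t a) := by
  intro x y hxy
  calc t a x ≤ ⨆ s ∈ ({x, y} : Set V), t a s := le_iSup₂_of_le x (by simp) le_rfl
    _ = t a y := by rw [← hsup, sSup_pair, sup_eq_right.mpr hxy]

theorem tensor_sSup_sSup_le_sSup (hcomm : ∀ a b, t a b = t b a)
    (hsup : ∀ (a : V) (Sv : Set V), t a (sSup Sv) = ⨆ s ∈ Sv, t a s) {A B C : Set V}
    (h : ∀ a ∈ A, ∀ b ∈ B, ∃ c ∈ C, t a b ≤ c) :
    t (sSup A) (sSup B) ≤ sSup C := by
  rw [hsup]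
  refine iSup₂_le fun b hb => ?_
  rw [hcomm, hsup]
  refine iSup₂_le fun a ha => ?_
  obtain ⟨c, hc, hle⟩ := h a ha b hb
  exact (hcomm b a ▸ hle).trans (le_sSup hc)

namespace ZigZag

variable {S : Type*} {W : S → S → V} {R : V → Set (S × S)}

theorem exists_ge_tensor_hom (hassoc : ∀ a b c, t (t a b) c = t a (t b c))
    (hmono : ∀ a, Monotone (t a)) (hWtrans : ∀ a b c, t (W a b) (W b c) ≤ W a c)
    {a b : S} {v : V} (h : ZigZag t W R a b v) (c : S) :
    ∃ u, ZigZag t W R a c u ∧ t v (W b c) ≤ u := by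
  cases h with
  | base => exact ⟨W a c, .base a c, hWtrans a b c⟩
  | step x y _ r v hv hr =>
    refine ⟨t (t v r) (W y c), .step a x y c r v hv hr, ?_⟩
    rw [hassoc]
    exact hmono _ (hWtrans y b c)

theorem exists_ge_tensor (hcomm : ∀ a b, t a b = t b a)
    (hassoc : ∀ a b c, t (t a b) c = t a (t b c))
    (hmono : ∀ a, Monotone (t a)) (hWtrans : ∀ a b c, t (W a b) (W b c) ≤ W a c)
    {b c : S} {w : V} (hw : ZigZag t W R b c w) {a : S} {v : V} (hv : ZigZag t W R a b v) :
    ∃ u, ZigZag t W R a c u ∧ t v w ≤ u := by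
  induction hw with
  | base c => exact hv.exists_ge_tensor_hom hassoc hmono hWtrans c
  | step x y c r w _ hr ih =>
    obtain ⟨u, hu, hle⟩ := ih
    refine ⟨t (t u r) (W y c), .step a x y c r u hu hr, ?_⟩
    have hmono_left : ∀ a, Monotone (t · a) := fun a x y hxy => by
      simp only [hcomm _ a]
      exact hmono a hxy
    calc t v (t (t w r) (W y c)) = t (t (t v w) r) (W y c) := by rw [← hassoc, ← hassoc]
      _ ≤ t (t u r) (W y c) := hmono_left _ (hmono_left r hle)

end ZigZag

end

theorem shortest_path_Vcat_general {V S : Type*} [CompleteLattice V]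
    (t : V → V → V) (e : V) (W : S → S → V) (R : V → Set (S × S))
    (hcomm : ∀ a b, t a b = t b a)
    (hassoc : ∀ a b c, t (t a b) c = t a (t b c))
    (hsup : ∀ (a : V) (Sv : Set V), t a (sSup Sv) = ⨆ s ∈ Sv, t a s)
    (hWrefl : ∀ a, e ≤ W a a)
    (hWtrans : ∀ a b c, t (W a b) (W b c) ≤ W a c) :
    (∀ a b : S, W a b ≤ sSup {v | ZigZag t W R a b v}) ∧
    (∀ a : S, e ≤ sSup {v | ZigZag t W R a a v}) ∧
    (∀ a b c : S,
        t (sSup {v | ZigZag t W R a b v}) (sSup {v | ZigZag t W R b c v}) ≤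
          sSup {v | ZigZag t W R a c v}) := by
  have hmono := monotone_of_tensor_sSup hsup
  refine ⟨fun a b => le_sSup (.base a b),
    fun a => (hWrefl a).trans (le_sSup (.base a a)), fun a b c => ?_⟩
  exact tensor_sSup_sSup_le_sSup hcomm hsup fun v hv w hw =>
    ZigZag.exists_ge_tensor hcomm hassoc hmono hWtrans hw hv

/-- the shortest-path formula yields a V-category structure. -/
theorem shortest_path_Vcat {V S : Type*} [CompleteLattice V]
    (t : V → V → V) (e : V) (W : S → S → V) (R : V → Set (S × S))
    (hcomm : ∀ a b, t a b = t b a)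
    (hassoc : ∀ a b c, t (t a b) c = t a (t b c))
    (hunit : ∀ a, t e a = a)
    (hsup : ∀ (a : V) (Sv : Set V), t a (sSup Sv) = ⨆ s ∈ Sv, t a s)
    (hWrefl : ∀ a, e ≤ W a a)
    (hWtrans : ∀ a b c, t (W a b) (W b c) ≤ W a c) :
    (∀ a b : S, W a b ≤ sSup {v | ZigZag t W R a b v}) ∧
    (∀ a : S, e ≤ sSup {v | ZigZag t W R a a v}) ∧
    (∀ a b c : S,
        t (sSup {v | ZigZag t W R a b v}) (sSup {v | ZigZag t W R b c v}) ≤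
          sSup {v | ZigZag t W R a c v}) :=
  shortest_path_Vcat_general t e W R hcomm hassoc hsup hWrefl hWtrans
end

section
/- Let V be a completely distributive commutative quantale and X a V-category with object set X₀. Define for subsets A', A ⊆ X₀ the value P(A',A) = ⋁{s ∈ V | (∀x'∈A' ∃x∈A, s ≤ X(x',x)) ∧ (∀x∈A ∃x'∈A', s ≤ X(x',x))}. Then P(A',A) = (⋀_{x'∈A'} ⋁_{x∈A} X(x',x)) ⊓ (⋀_{x∈A} ⋁_{x'∈A'} X(x',x)) for all A', A. -/
/-- The totally-below relation. -/
def TotallyBelow {V : Type*} [CompleteLattice V] (s r : V) : Prop :=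
  ∀ D : Set V, IsLowerSet D → r ≤ sSup D → s ∈ D

/-!
Every `s` in the set on the left lies below both inf-sups, which gives `≤`. Conversely, an
element totally below the right-hand side `r` lies below some term of each of the sups `⋁_x X(x',x)`
and `⋁_{x'} X(x',x)`, so it belongs to the set on the left; since `r` is the join of the elements
totally below it, `≥` follows.
-/

section

variable {V ι κ : Type*} [CompleteLattice V]

theorem TotallyBelow.exists_mem_le_of_le_iSup₂ {s r : V} (hs : TotallyBelow s r) {I : Set ι}
    {f : ι → V} (hr : r ≤ ⨆ i ∈ I, f i) : ∃ i ∈ I, s ≤ f i := by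
  refine hs {v | ∃ i ∈ I, v ≤ f i} (fun a b hba ⟨i, hi, ha⟩ => ⟨i, hi, hba.trans ha⟩) ?_
  exact hr.trans (iSup₂_le fun i hi => le_sSup ⟨i, hi, le_rfl⟩)

theorem TotallyBelow.forall_exists_le_of_le_iInf₂_iSup₂ {s r : V} (hs : TotallyBelow s r)
    {I : Set ι} {J : Set κ} {f : ι → κ → V} (hr : r ≤ ⨅ i ∈ I, ⨆ j ∈ J, f i j) :
    ∀ i ∈ I, ∃ j ∈ J, s ≤ f i j :=
  fun i hi => hs.exists_mem_le_of_le_iSup₂ (hr.trans (iInf₂_le i hi))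

theorem le_iInf₂_iSup₂_of_forall_exists_le {s : V} {I : Set ι} {J : Set κ} {f : ι → κ → V}
    (h : ∀ i ∈ I, ∃ j ∈ J, s ≤ f i j) : s ≤ ⨅ i ∈ I, ⨆ j ∈ J, f i j :=
  le_iInf₂ fun i hi =>
    let ⟨j, hj, hs⟩ := h i hi
    hs.trans (le_iSup₂ (f := fun j _ => f i j) j hj)

end

theorem hausdorff_distance_formula_general {V X : Type*} [CompleteLattice V]
    (d : X → X → V)
    (hcd : ∀ r : V, r = sSup {s | TotallyBelow s r}) :
    ∀ A' A : Set X,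
      sSup {s : V | (∀ x' ∈ A', ∃ x ∈ A, s ≤ d x' x) ∧ (∀ x ∈ A, ∃ x' ∈ A', s ≤ d x' x)} =
        (⨅ x' ∈ A', ⨆ x ∈ A, d x' x) ⊓ (⨅ x ∈ A, ⨆ x' ∈ A', d x' x) := by
  intro A' A
  set r := (⨅ x' ∈ A', ⨆ x ∈ A, d x' x) ⊓ (⨅ x ∈ A, ⨆ x' ∈ A', d x' x)
  apply le_antisymm
  · exact sSup_le fun s ⟨hA', hA⟩ =>
      le_inf (le_iInf₂_iSup₂_of_forall_exists_le hA')
        (le_iInf₂_iSup₂_of_forall_exists_le (f := fun x x' => d x' x) hA)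
  · calc r = sSup {s | TotallyBelow s r} := hcd r
      _ ≤ _ := sSup_le_sSup fun s (hs : TotallyBelow s r) =>
        show _ ∧ _ from ⟨hs.forall_exists_le_of_le_iInf₂_iSup₂ inf_le_left,
          hs.forall_exists_le_of_le_iInf₂_iSup₂ (f := fun x x' => d x' x) inf_le_right⟩

/-- over a completely distributive quantale, the sup-of-simulations formula
for the Pompeiu–Hausdorff distance coincides with the inf-sup formula. -/
theorem hausdorff_distance_formula {V X : Type*} [CompleteLattice V]
    (t : V → V → V) (e : V) (d : X → X → V)
    (hcomm : ∀ a b, t a b = t b a)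
    (hassoc : ∀ a b c, t (t a b) c = t a (t b c))
    (hunit : ∀ a, t e a = a)
    (hsup : ∀ (a : V) (S : Set V), t a (sSup S) = ⨆ s ∈ S, t a s)
    (hcd : ∀ r : V, r = sSup {s | TotallyBelow s r})
    (hrefl : ∀ x, e ≤ d x x)
    (htrans : ∀ x y z, t (d x y) (d y z) ≤ d x z) :
    ∀ A' A : Set X,
      sSup {s : V | (∀ x' ∈ A', ∃ x ∈ A, s ≤ d x' x) ∧ (∀ x ∈ A, ∃ x' ∈ A', s ≤ d x' x)} =
        (⨅ x' ∈ A', ⨆ x ∈ A, d x' x) ⊓ (⨅ x ∈ A, ⨆ x' ∈ A', d x' x) :=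
  hausdorff_distance_formula_general d hcd
end

section
/- Let V be a completely distributive commutative quantale and X a V-category. The Pompeiu–Hausdorff distance on subsets, P(A',A) = (⋀_{x'∈A'} ⋁_{x∈A} X(x',x)) ⊓ (⋀_{x∈A} ⋁_{x'∈A'} X(x',x)), makes the powerset of the objects of X into a V-category: e ≤ P(A,A) and P(A,B) ⊗ P(B,C) ≤ P(A,C) for all subsets A, B, C. -/
section

variable {V X : Type*} [CompleteLattice V] {t : V → V → V}

theorem monotone_of_sSup_distrib (hsup : ∀ (a : V) (S : Set V), t a (sSup S) = ⨆ s ∈ S, t a s)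
    (c : V) : Monotone (t c) := by
  intro a b hab
  calc t c a ≤ ⨆ s ∈ ({a, b} : Set V), t c s := le_biSup (t c) (by simp)
    _ = t c (sSup {a, b}) := (hsup c _).symm
    _ = t c b := by rw [sSup_pair, sup_eq_right.mpr hab]

theorem biSup_distrib_of_sSup_distrib
    (hsup : ∀ (a : V) (S : Set V), t a (sSup S) = ⨆ s ∈ S, t a s)
    (a : V) {ι : Type*} (s : Set ι) (f : ι → V) :
    t a (⨆ i ∈ s, f i) = ⨆ i ∈ s, t a (f i) := by
  rw [← sSup_image, hsup, iSup_image]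

theorem monotone₂_of_sSup_distrib (hcomm : ∀ a b, t a b = t b a)
    (hsup : ∀ (a : V) (S : Set V), t a (sSup S) = ⨆ s ∈ S, t a s)
    {a a' b b' : V} (ha : a ≤ a') (hb : b ≤ b') : t a b ≤ t a' b' :=
  calc t a b ≤ t a b' := monotone_of_sSup_distrib hsup a hb
    _ = t b' a := hcomm a b'
    _ ≤ t b' a' := monotone_of_sSup_distrib hsup b' ha
    _ = t a' b' := hcomm b' a'

def oneSidedHausdorff (d : X → X → V) (A B : Set X) : V :=
  ⨅ a ∈ A, ⨆ b ∈ B, d a b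

theorem le_oneSidedHausdorff_self {e : V} {d : X → X → V} (hrefl : ∀ x, e ≤ d x x)
    (A : Set X) : e ≤ oneSidedHausdorff d A A :=
  le_iInf₂ fun a ha => (hrefl a).trans (le_biSup (d a) ha)

theorem oneSidedHausdorff_comp_le (hcomm : ∀ a b, t a b = t b a)
    (hsup : ∀ (a : V) (S : Set V), t a (sSup S) = ⨆ s ∈ S, t a s)
    {d : X → X → V} (htrans : ∀ x y z, t (d x y) (d y z) ≤ d x z) (A B C : Set X) :
    t (oneSidedHausdorff d A B) (oneSidedHausdorff d B C) ≤ oneSidedHausdorff d A C := by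
  refine le_iInf₂ fun a ha => ?_
  calc t (oneSidedHausdorff d A B) (oneSidedHausdorff d B C)
      ≤ t (oneSidedHausdorff d B C) (⨆ b ∈ B, d a b) := by
        rw [hcomm]
        exact monotone_of_sSup_distrib hsup _ (biInf_le _ ha)
    _ = ⨆ b ∈ B, t (oneSidedHausdorff d B C) (d a b) :=
        biSup_distrib_of_sSup_distrib hsup _ _ _
    _ ≤ ⨆ c ∈ C, d a c := iSup₂_le fun b hb =>
      calc t (oneSidedHausdorff d B C) (d a b)
          ≤ t (⨆ c ∈ C, d b c) (d a b) :=
            monotone₂_of_sSup_distrib hcomm hsup (biInf_le _ hb) le_rfl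
        _ = ⨆ c ∈ C, t (d a b) (d b c) := by
          rw [hcomm]; exact biSup_distrib_of_sSup_distrib hsup _ _ _
        _ ≤ ⨆ c ∈ C, d a c := iSup₂_le fun c hc => (htrans a b c).trans (le_biSup (d a) hc)

end

theorem hausdorff_Vcat_general {V X : Type*} [CompleteLattice V]
    (t : V → V → V) (e : V) (d : X → X → V)
    (hcomm : ∀ a b, t a b = t b a)
    (hsup : ∀ (a : V) (S : Set V), t a (sSup S) = ⨆ s ∈ S, t a s)
    (hrefl : ∀ x, e ≤ d x x)
    (htrans : ∀ x y z, t (d x y) (d y z) ≤ d x z) :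
    (∀ A : Set X,
        e ≤ (⨅ x' ∈ A, ⨆ x ∈ A, d x' x) ⊓ (⨅ x ∈ A, ⨆ x' ∈ A, d x' x)) ∧
    (∀ A B C : Set X,
        t ((⨅ x' ∈ A, ⨆ x ∈ B, d x' x) ⊓ (⨅ x ∈ B, ⨆ x' ∈ A, d x' x))
          ((⨅ x' ∈ B, ⨆ x ∈ C, d x' x) ⊓ (⨅ x ∈ C, ⨆ x' ∈ B, d x' x)) ≤
        (⨅ x' ∈ A, ⨆ x ∈ C, d x' x) ⊓ (⨅ x ∈ C, ⨆ x' ∈ A, d x' x)) := by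
  have htrans_flip : ∀ x y z, t (flip d x y) (flip d y z) ≤ flip d x z := fun x y z => by
    rw [hcomm]; exact htrans z y x
  refine ⟨fun A => le_inf (le_oneSidedHausdorff_self hrefl A)
    (le_oneSidedHausdorff_self (d := flip d) hrefl A), fun A B C => ?_⟩
  change t (oneSidedHausdorff d A B ⊓ oneSidedHausdorff (flip d) B A)
      (oneSidedHausdorff d B C ⊓ oneSidedHausdorff (flip d) C B) ≤
    oneSidedHausdorff d A C ⊓ oneSidedHausdorff (flip d) C A
  refine le_inf ?_ ?_
  · exact (monotone₂_of_sSup_distrib hcomm hsup inf_le_left inf_le_left).trans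
      (oneSidedHausdorff_comp_le hcomm hsup htrans A B C)
  · calc _ ≤ t (oneSidedHausdorff (flip d) B A) (oneSidedHausdorff (flip d) C B) :=
          monotone₂_of_sSup_distrib hcomm hsup inf_le_right inf_le_right
      _ = t (oneSidedHausdorff (flip d) C B) (oneSidedHausdorff (flip d) B A) := hcomm _ _
      _ ≤ _ := oneSidedHausdorff_comp_le hcomm hsup htrans_flip C B A

/-- the Pompeiu–Hausdorff distance makes the powerset a V-category. -/
theorem hausdorff_Vcat {V X : Type*} [CompleteLattice V]
    (t : V → V → V) (e : V) (d : X → X → V)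
    (hcomm : ∀ a b, t a b = t b a)
    (hassoc : ∀ a b c, t (t a b) c = t a (t b c))
    (hunit : ∀ a, t e a = a)
    (hsup : ∀ (a : V) (S : Set V), t a (sSup S) = ⨆ s ∈ S, t a s)
    (hcd : ∀ r : V, r = sSup {s | TotallyBelow s r})
    (hrefl : ∀ x, e ≤ d x x)
    (htrans : ∀ x y z, t (d x y) (d y z) ≤ d x z) :
    (∀ A : Set X,
        e ≤ (⨅ x' ∈ A, ⨆ x ∈ A, d x' x) ⊓ (⨅ x ∈ A, ⨆ x' ∈ A, d x' x)) ∧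
    (∀ A B C : Set X,
        t ((⨅ x' ∈ A, ⨆ x ∈ B, d x' x) ⊓ (⨅ x ∈ B, ⨆ x' ∈ A, d x' x))
          ((⨅ x' ∈ B, ⨆ x ∈ C, d x' x) ⊓ (⨅ x ∈ C, ⨆ x' ∈ B, d x' x)) ≤
        (⨅ x' ∈ A, ⨆ x ∈ C, d x' x) ⊓ (⨅ x ∈ C, ⨆ x' ∈ A, d x' x)) :=
  hausdorff_Vcat_general t e d hcomm hsup hrefl htrans
end
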